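/- arXiv:1602.08319 — 3 statements merged into one kernel-verified Lean document; each statement's English description precedes it below -/
import Mathlib

section
/- Let $d\ge 2$, $\alpha>0$, $n>2$. For $\eta > 0$ satisfying $\alpha^2\,\eta\,(\eta+n-2) = d-1$, the function $f(s)=s^\eta$ solves the eigenvalue ODE $-\alpha^2\,\frac{d}{ds}\big[\frac{s^{n-1}}{(1+s^2)^\delta} f'(s)\big] + \frac{(d-1)\,s^{n-3}}{(1+s^2)^\delta} f(s) - \frac{\Lambda\, s^{n-1}}{(1+s^2)^{\delta+1}} f(s) = 0$ for all $s>0$, with $\Lambda = 2\,\alpha^2\,\delta\,\eta$. -/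
/-!
On `s > 0` the flux `s^(n-1) (1+s²)^(-δ) f'(s)` of `f(s) = s^η` is `η s^(n+η-2) (1+s²)^(-δ)`.
Differentiating it produces one term `η (n+η-2) s^(n+η-3) (1+s²)^(-δ)`, which the relation
`α² η (η+n-2) = d - 1` cancels against the angular term, and one term `-2δη s^(n+η-1) (1+s²)^(-δ-1)`,
which `Λ = 2α²δη` cancels against the potential term.
-/

open Real Filter Topology

lemma rpow_div_rpow_mul_rpow {s B : ℝ} (hs : 0 < s) (hB : 0 ≤ B) (a b c : ℝ) :
    s ^ a / B ^ c * s ^ b = s ^ (a + b) * B ^ (-c) := by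
  rw [rpow_add hs, rpow_neg hB]
  ring

lemma flux_rpow_eventuallyEq (a δ η : ℝ) {s : ℝ} (hs : 0 < s) :
    (fun t : ℝ => t ^ a / (1 + t ^ 2) ^ δ * deriv (fun r : ℝ => r ^ η) t)
      =ᶠ[𝓝 s] fun t => η * (t ^ (a + (η - 1)) * (1 + t ^ 2) ^ (-δ)) := by
  filter_upwards [eventually_gt_nhds hs] with t ht
  rw [Real.deriv_rpow_const, mul_left_comm, rpow_div_rpow_mul_rpow ht (by positivity)]

lemma hasDerivAt_rpow_mul_one_add_sq_rpow_neg (p δ : ℝ) {s : ℝ} (hs : 0 < s) :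
    HasDerivAt (fun t : ℝ => t ^ p * (1 + t ^ 2) ^ (-δ))
      (p * s ^ (p - 1) * (1 + s ^ 2) ^ (-δ) - 2 * δ * s ^ (p + 1) * (1 + s ^ 2) ^ (-δ - 1)) s := by
  have hpow : HasDerivAt (fun t : ℝ => t ^ p) (p * s ^ (p - 1)) s :=
    hasDerivAt_rpow_const (Or.inl hs.ne')
  have hweight : HasDerivAt (fun t : ℝ => (1 + t ^ 2) ^ (-δ))
      (2 * s * (-δ) * (1 + s ^ 2) ^ (-δ - 1)) s := by
    have hbase : HasDerivAt (fun t : ℝ => 1 + t ^ 2) (2 * s) s := by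
      simpa using (hasDerivAt_pow 2 s).const_add 1
    exact hbase.rpow_const (Or.inl (by positivity))
  refine (hpow.mul hweight).congr_deriv ?_
  rw [rpow_add_one hs.ne']
  ring

theorem stmt_3_general (d : ℕ) (α n δ η Λ : ℝ)
    (heq : α ^ 2 * η * (η + n - 2) = (d : ℝ) - 1)
    (hΛ : Λ = 2 * α ^ 2 * δ * η) :
    ∀ s : ℝ, 0 < s →
      - α ^ 2 * deriv (fun t : ℝ => t ^ (n - 1) / (1 + t ^ 2) ^ δ * deriv (fun r : ℝ => r ^ η) t) s
        + ((d : ℝ) - 1) * s ^ (n - 3) / (1 + s ^ 2) ^ δ * s ^ η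
        - Λ * s ^ (n - 1) / (1 + s ^ 2) ^ (δ + 1) * s ^ η = 0 := by
  intro s hs
  have hB : 0 ≤ 1 + s ^ 2 := by positivity
  have hflux := (hasDerivAt_rpow_mul_one_add_sq_rpow_neg (n - 1 + (η - 1)) δ hs).const_mul η
  rw [show n - 1 + (η - 1) - 1 = n - 3 + η by ring,
    show n - 1 + (η - 1) + 1 = n - 1 + η by ring] at hflux
  have hangular : ((d : ℝ) - 1) * s ^ (n - 3) / (1 + s ^ 2) ^ δ * s ^ η
      = ((d : ℝ) - 1) * (s ^ (n - 3 + η) * (1 + s ^ 2) ^ (-δ)) := by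
    rw [mul_div_assoc, mul_assoc, rpow_div_rpow_mul_rpow hs hB]
  have hpotential : Λ * s ^ (n - 1) / (1 + s ^ 2) ^ (δ + 1) * s ^ η
      = Λ * (s ^ (n - 1 + η) * (1 + s ^ 2) ^ (-δ - 1)) := by
    rw [mul_div_assoc, mul_assoc, rpow_div_rpow_mul_rpow hs hB, neg_add']
  rw [(flux_rpow_eventuallyEq (n - 1) δ η hs).deriv_eq, hflux.deriv, hangular, hpotential,
    ← heq, hΛ]
  ring

theorem stmt_3 (d : ℕ) (hd : 2 ≤ d) (α n δ η Λ : ℝ) (hα : 0 < α) (hn : 2 < n)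
    (hδ : 0 < δ) (hη : 0 < η) (heq : α ^ 2 * η * (η + n - 2) = (d : ℝ) - 1)
    (hΛ : Λ = 2 * α ^ 2 * δ * η) :
    ∀ s : ℝ, 0 < s →
      - α ^ 2 * deriv (fun t : ℝ => t ^ (n - 1) / (1 + t ^ 2) ^ δ * deriv (fun r : ℝ => r ^ η) t) s
        + ((d : ℝ) - 1) * s ^ (n - 3) / (1 + s ^ 2) ^ δ * s ^ η
        - Λ * s ^ (n - 1) / (1 + s ^ 2) ^ (δ + 1) * s ^ η = 0 :=
  stmt_3_general d α n δ η Λ heq hΛ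
end

section
/- Let $\alpha>0$, $n>0$, $\delta > 1 + n/2$. The function $f(s)=s^2 - \frac{n}{2\delta-n}$ solves the radial eigenvalue ODE $-\alpha^2\,\frac{d}{ds}\big[\frac{s^{n-1}}{(1+s^2)^\delta} f'(s)\big] - \frac{\Lambda\, s^{n-1}}{(1+s^2)^{\delta+1}} f(s) = 0$ for all $s>0$, with $\Lambda = 2\,\alpha^2\,(2\delta-n)$. -/
open Real

/-!
The flux of `f(s) = s² - n/(2δ-n)` is `w(s) · 2s` with `w(s) = s^(n-1)/(1+s²)^δ`, and the
logarithmic derivative of `w` is `(n-1)/s - 2δs/(1+s²)`. Hence the derivative of the flux is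
`2w/(1+s²) · (n - (2δ-n)s²) = -(2δ-n) · 2w/(1+s²) · f(s)`, which is exactly what the
potential term `Λ w/(1+s²) f` cancels when `Λ = 2α²(2δ-n)`.
-/

lemma deriv_sq_sub_const (c : ℝ) : deriv (fun r : ℝ => r ^ (2 : ℕ) - c) = fun t => 2 * t := by
  funext t
  simp [mul_comm]

lemma hasDerivAt_rpow_div_one_add_sq_rpow (p q : ℝ) {s : ℝ} (hs : 0 < s) :
    HasDerivAt (fun t : ℝ => t ^ p / (1 + t ^ 2) ^ q)
      (s ^ p / (1 + s ^ 2) ^ q * (p / s - 2 * q * s / (1 + s ^ 2))) s := by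
  have hpos : 0 < 1 + s ^ 2 := by positivity
  have hnum : HasDerivAt (fun t : ℝ => t ^ p) (p * s ^ (p - 1)) s :=
    hasDerivAt_rpow_const (Or.inl hs.ne')
  have hden : HasDerivAt (fun t : ℝ => (1 + t ^ 2) ^ q) (q * (1 + s ^ 2) ^ (q - 1) * (2 * s)) s := by
    have := ((hasDerivAt_pow 2 s).const_add 1).rpow_const (p := q) (Or.inl hpos.ne')
    convert this using 1
    push_cast
    ring
  refine (hnum.div hden (rpow_pos_of_pos hpos q).ne').congr_deriv ?_
  rw [rpow_sub hs, rpow_sub hpos, rpow_one, rpow_one]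
  field_simp

lemma hasDerivAt_radial_flux_sq (n δ : ℝ) {s : ℝ} (hs : 0 < s) :
    HasDerivAt (fun t : ℝ => t ^ (n - 1) / (1 + t ^ 2) ^ δ * (2 * t))
      (2 * s ^ (n - 1) / (1 + s ^ 2) ^ (δ + 1) * (n - (2 * δ - n) * s ^ 2)) s := by
  have hpos : 0 < 1 + s ^ 2 := by positivity
  refine ((hasDerivAt_rpow_div_one_add_sq_rpow (n - 1) δ hs).mul
    ((hasDerivAt_id s).const_mul 2)).congr_deriv ?_
  rw [id_eq, rpow_add hpos, rpow_one]
  field_simp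
  ring

theorem stmt_4_general (α n δ Λ : ℝ) (hδ : 1 + n / 2 < δ)
    (hΛ : Λ = 2 * α ^ 2 * (2 * δ - n)) :
    ∀ s : ℝ, 0 < s →
      - α ^ 2 * deriv (fun t : ℝ => t ^ (n - 1) / (1 + t ^ 2) ^ δ *
          deriv (fun r : ℝ => r ^ (2 : ℕ) - n / (2 * δ - n)) t) s
        - Λ * s ^ (n - 1) / (1 + s ^ 2) ^ (δ + 1) * (s ^ (2 : ℕ) - n / (2 * δ - n)) = 0 := by
  intro s hs
  have hgap : 2 * δ - n ≠ 0 := by linarith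
  rw [deriv_sq_sub_const, (hasDerivAt_radial_flux_sq n δ hs).deriv, hΛ]
  field_simp
  ring

theorem stmt_4 (α n δ Λ : ℝ) (hα : 0 < α) (hn : 0 < n) (hδ : 1 + n / 2 < δ)
    (hΛ : Λ = 2 * α ^ 2 * (2 * δ - n)) :
    ∀ s : ℝ, 0 < s →
      - α ^ 2 * deriv (fun t : ℝ => t ^ (n - 1) / (1 + t ^ 2) ^ δ *
          deriv (fun r : ℝ => r ^ (2 : ℕ) - n / (2 * δ - n)) t) s
        - Λ * s ^ (n - 1) / (1 + s ^ 2) ^ (δ + 1) * (s ^ (2 : ℕ) - n / (2 * δ - n)) = 0 :=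
  stmt_4_general α n δ Λ hδ hΛ
end

section
/- Let $d\ge 2$, $\alpha>0$, $n>2$, $\delta>1$ with $2\delta>n$, and let $\eta>0$ solve $\eta(\eta+n-2)=(d-1)/\alpha^2$. Then $\Lambda_{0,1} := 2\alpha^2\delta\eta < \Lambda_{1,0} := 2\alpha^2(2\delta-n)$ if and only if $\alpha^2 > \frac{(d-1)\,\delta^2}{n\,(2\delta-n)\,(\delta-1)}$. -/
/-!
Dividing by `2 α² > 0`, the inequality `Λ₀,₁ < Λ₁,₀` says `η < η₀ := 2 - n / δ`. Since
`t ↦ t (t + n - 2)` is strictly increasing on `[0, ∞)`, this is equivalent to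
`(d - 1) / α² = η (η + n - 2) < η₀ (η₀ + n - 2) = n (2δ - n)(δ - 1) / δ²`, which rearranges to the
stated lower bound on `α²`.
-/

theorem strictMonoOn_mul_add_self {c : ℝ} (hc : 0 ≤ c) :
    StrictMonoOn (fun t : ℝ => t * (t + c)) (Set.Ici 0) := by
  intro s hs t ht hst
  simp only [Set.mem_Ici] at hs ht
  nlinarith

theorem two_sub_div_mul_add_sub_two {n δ : ℝ} (hδ : δ ≠ 0) :
    (2 - n / δ) * (2 - n / δ + n - 2) = n * (2 * δ - n) * (δ - 1) / δ ^ 2 := by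
  field_simp
  ring

theorem stmt_7_general (d : ℕ) (α n δ η : ℝ) (hα : 0 < α) (hn : 2 < n)
    (hδn : n < 2 * δ) (hη : 0 < η)
    (heq : η * (η + n - 2) = ((d : ℝ) - 1) / α ^ 2) :
    2 * α ^ 2 * δ * η < 2 * α ^ 2 * (2 * δ - n) ↔
      ((d : ℝ) - 1) * δ ^ 2 / (n * (2 * δ - n) * (δ - 1)) < α ^ 2 := by
  have hδ : 0 < δ := by linarith
  have hα2 : 0 < α ^ 2 := by positivity
  have hη₀ : 0 ≤ 2 - n / δ := by rw [sub_nonneg, div_le_iff₀ hδ]; linarith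
  have hN : 0 < n * (2 * δ - n) * (δ - 1) := by
    have : 0 < 2 * δ - n := by linarith
    have : 0 < δ - 1 := by linarith
    positivity
  have hmono := (strictMonoOn_mul_add_self (by linarith : 0 ≤ n - 2)).lt_iff_lt
    (Set.mem_Ici.2 hη.le) (Set.mem_Ici.2 hη₀)
  simp only [← add_sub_assoc] at hmono
  calc 2 * α ^ 2 * δ * η < 2 * α ^ 2 * (2 * δ - n) ↔ η < 2 - n / δ := by
        rw [mul_assoc, mul_lt_mul_iff_right₀ (by positivity), show 2 - n / δ = (2 * δ - n) / δ by
          field_simp, lt_div_iff₀ hδ, mul_comm]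
    _ ↔ ((d : ℝ) - 1) / α ^ 2 < n * (2 * δ - n) * (δ - 1) / δ ^ 2 := by
        rw [← hmono, heq, two_sub_div_mul_add_sub_two hδ.ne']
    _ ↔ _ := by
        rw [div_lt_iff₀ hα2, div_lt_iff₀ hN, div_mul_eq_mul_div, lt_div_iff₀ (by positivity)]
        constructor <;> intro h <;> linarith

theorem stmt_7 (d : ℕ) (hd : 2 ≤ d) (α n δ η : ℝ) (hα : 0 < α) (hn : 2 < n)
    (hδ1 : 1 < δ) (hδn : n < 2 * δ) (hη : 0 < η)
    (heq : η * (η + n - 2) = ((d : ℝ) - 1) / α ^ 2) :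
    2 * α ^ 2 * δ * η < 2 * α ^ 2 * (2 * δ - n) ↔
      ((d : ℝ) - 1) * δ ^ 2 / (n * (2 * δ - n) * (δ - 1)) < α ^ 2 :=
  stmt_7_general d α n δ η hα hn hδn hη heq
end
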